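/- arXiv:2207.09257 — 11 statements merged into one kernel-verified Lean document; each statement's English description precedes it below -/
import Mathlib

section
/- Let X be a commutative quandle, i.e. x∗y = y∗x for all x, y ∈ X. Then the set of idempotents of the quandle ring ℤ/2ℤ[X] is exactly { ∑_{x∈F} e_x : F a nonempty finite subset of X }. -/
/-- The quandle ring multiplication on `X →₀ k` determined by
`e_x · e_y = e_{op x y}` extended bilinearly. -/
noncomputable def qmul {X : Type*} {k : Type*} [CommRing k] (op : X → X → X)
    (f g : X →₀ k) : X →₀ k :=
  f.sum fun x a => g.sum fun y b => Finsupp.single (op x y) (a * b)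

/-- If `X` is a commutative quandle, then the idempotents of `ℤ/2ℤ[X]` are
exactly the sums `∑_{x ∈ F} e_x` over nonempty finite subsets `F` of `X`. -/
theorem idempotents_of_commutative_quandle_mod_two {X : Type*} (op : X → X → X)
    (hidem : ∀ x, op x x = x)
    (hbij : ∀ y, Function.Bijective (fun x => op x y))
    (hdist : ∀ x y z, op (op x y) z = op (op x z) (op y z))
    (hcomm : ∀ x y, op x y = op y x) :
    {u : X →₀ ZMod 2 | u ≠ 0 ∧ qmul op u u = u} =
      {u : X →₀ ZMod 2 | ∃ F : Finset X, F.Nonempty ∧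
        u = ∑ x ∈ F, Finsupp.single x (1 : ZMod 2)} := by
  classical
  have h1 : ∀ a : ZMod 2, a ≠ 0 → a = 1 := by decide
  ext u
  simp only [Set.mem_setOf_eq]
  constructor
  · rintro ⟨hne, -⟩
    refine ⟨u.support, Finsupp.support_nonempty_iff.mpr hne, ?_⟩
    conv_lhs => rw [← Finsupp.sum_single u]
    rw [Finsupp.sum]
    exact Finset.sum_congr rfl fun x hx => by
      rw [h1 _ (Finsupp.mem_support_iff.mp hx)]
  · rintro ⟨F, hF, rfl⟩
    set u := ∑ x ∈ F, Finsupp.single x (1 : ZMod 2) with hudef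
    have hu : ∀ a, u a = if a ∈ F then 1 else 0 := by
      intro a
      rw [hudef, Finset.sum_apply']
      simp [Finsupp.single_apply]
    have hne : u ≠ 0 := by
      obtain ⟨x, hx⟩ := hF
      intro h
      have := hu x
      rw [h, if_pos hx] at this
      exact one_ne_zero this.symm
    have hsupp : u.support = F := by
      ext a
      simp only [Finsupp.mem_support_iff, hu]
      by_cases h : a ∈ F <;> simp [h]
    refine ⟨hne, ?_⟩
    have key : qmul op u u = ∑ x ∈ F, ∑ y ∈ F, Finsupp.single (op x y) (1 : ZMod 2) := by
      unfold qmul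
      rw [Finsupp.sum, hsupp]
      refine Finset.sum_congr rfl fun x hx => ?_
      rw [Finsupp.sum, hsupp]
      refine Finset.sum_congr rfl fun y hy => ?_
      rw [hu x, hu y, if_pos hx, if_pos hy, one_mul]
    rw [key, ← Finset.sum_product']
    rw [← Finset.sum_filter_add_sum_filter_not (F ×ˢ F)
      (fun p : X × X => p.1 = p.2)]
    have hoff : ∑ p ∈ (F ×ˢ F).filter (fun p : X × X => ¬ p.1 = p.2),
        Finsupp.single (op p.1 p.2) (1 : ZMod 2) = 0 := by
      refine Finset.sum_involution (fun p _ => Prod.swap p) ?_ ?_ ?_ ?_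
      · intro p hp
        have : op p.2 p.1 = op p.1 p.2 := hcomm _ _
        simp only [Prod.swap, this]
        rw [← Finsupp.single_add]
        have h2 : (1 : ZMod 2) + 1 = 0 := by decide
        rw [h2, Finsupp.single_zero]
      · intro p hp _
        simp only [Finset.mem_filter] at hp
        intro h
        exact hp.2 (congrArg Prod.fst h).symm
      · intro p hp
        simp only [Finset.mem_filter, Finset.mem_product] at hp ⊢
        exact ⟨⟨hp.1.2, hp.1.1⟩, fun h => hp.2 h.symm⟩
      · intro p hp; rfl
    rw [hoff, add_zero]
    have hdiag : ∑ p ∈ (F ×ˢ F).filter (fun p : X × X => p.1 = p.2),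
        Finsupp.single (op p.1 p.2) (1 : ZMod 2) = u := by
      rw [hudef]
      refine Finset.sum_nbij' (fun p => p.1) (fun x => (x, x)) ?_ ?_ ?_ ?_ ?_
      · intro p hp
        simp only [Finset.mem_filter, Finset.mem_product] at hp
        exact hp.1.1
      · intro x hx
        simp [Finset.mem_filter, Finset.mem_product, hx]
      · intro p hp
        simp only [Finset.mem_filter] at hp
        exact Prod.ext rfl hp.2
      · intro x hx; rfl
      · intro p hp
        simp only [Finset.mem_filter] at hp
        rw [← hp.2, hidem]
    rw [hdiag]
end

section
/- Let X be a finite commutative quandle (x∗y = y∗x for all x, y ∈ X) with |X| = m. Then the number of idempotents of the quandle ring ℤ/2ℤ[X] is 2^m − 1. -/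
lemma zmod2_add_self (c : ZMod 2) : c + c = 0 := by revert c; decide

lemma zmod2_mul_self (c : ZMod 2) : c * c = c := by revert c; decide

lemma qmul_self_mod_two {X : Type*} (op : X → X → X)
    (hidem : ∀ x, op x x = x) (hcomm : ∀ x y, op x y = op y x)
    (u : X →₀ ZMod 2) : qmul op u u = u := by
  classical
  unfold qmul
  rw [Finsupp.sum]
  simp only [Finsupp.sum]
  rw [← Finset.sum_product']
  rw [← Finset.sum_filter_add_sum_filter_not (u.support ×ˢ u.support)
    (fun p => p.1 = p.2)]
  have hzero : ∑ p ∈ (u.support ×ˢ u.support).filter (fun p => ¬ p.1 = p.2),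
      Finsupp.single (op p.1 p.2) (u p.1 * u p.2) = 0 := by
    refine Finset.sum_involution (fun p _ => p.swap) ?_ ?_ ?_ ?_
    · intro p hp
      simp only [Prod.fst_swap, Prod.snd_swap]
      rw [hcomm p.2 p.1, mul_comm (u p.2), ← Finsupp.single_add,
        zmod2_add_self, Finsupp.single_zero]
    · intro p hp _ h
      simp only [Finset.mem_filter] at hp
      exact hp.2 (congrArg Prod.fst h).symm
    · intro p hp
      simp only [Finset.mem_filter, Finset.mem_product] at hp ⊢
      exact ⟨⟨hp.1.2, hp.1.1⟩, fun h => hp.2 h.symm⟩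
    · intro p _; rfl
  rw [hzero, add_zero]
  have hdiag : ∑ p ∈ (u.support ×ˢ u.support).filter (fun p => p.1 = p.2),
      Finsupp.single (op p.1 p.2) (u p.1 * u p.2)
      = ∑ x ∈ u.support, Finsupp.single x (u x) := by
    refine Finset.sum_nbij' (fun p => p.1) (fun x => (x, x)) ?_ ?_ ?_ ?_ ?_
    · intro p hp
      simp only [Finset.mem_filter, Finset.mem_product] at hp
      exact hp.1.1
    · intro x hx
      simp only [Finset.mem_filter, Finset.mem_product]
      exact ⟨⟨hx, hx⟩, trivial⟩
    · intro p hp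
      simp only [Finset.mem_filter] at hp
      exact Prod.ext rfl hp.2
    · intro x _; rfl
    · intro p hp
      simp only [Finset.mem_filter] at hp
      rw [← hp.2, hidem, zmod2_mul_self]
  rw [hdiag]
  exact Finsupp.sum_single u

/-- A finite commutative quandle of cardinality `m` has exactly `2^m - 1`
idempotents in its quandle ring over `ℤ/2ℤ`. -/
theorem card_idempotents_of_finite_commutative_quandle_mod_two
    {X : Type*} [Fintype X] (op : X → X → X) (m : ℕ)
    (hidem : ∀ x, op x x = x)
    (hbij : ∀ y, Function.Bijective (fun x => op x y))
    (hdist : ∀ x y z, op (op x y) z = op (op x z) (op y z))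
    (hcomm : ∀ x y, op x y = op y x)
    (hcard : Fintype.card X = m) :
    {u : X →₀ ZMod 2 | u ≠ 0 ∧ qmul op u u = u}.ncard = 2 ^ m - 1 := by
  classical
  have hfin : Finite (X →₀ ZMod 2) := Finite.of_equiv _ Finsupp.equivFunOnFinite.symm
  have hset : {u : X →₀ ZMod 2 | u ≠ 0 ∧ qmul op u u = u} = {(0 : X →₀ ZMod 2)}ᶜ := by
    ext u
    simp [qmul_self_mod_two op hidem hcomm u]
  rw [hset]
  have hcardF : Nat.card (X →₀ ZMod 2) = 2 ^ m := by
    rw [Nat.card_congr Finsupp.equivFunOnFinite, Nat.card_eq_fintype_card,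
      Fintype.card_fun, ZMod.card, hcard]
  have := Set.ncard_add_ncard_compl ({(0 : X →₀ ZMod 2)}) (Set.toFinite _) (Set.toFinite _)
  rw [Set.ncard_singleton, hcardF] at this
  omega
end

section
/- The integral quandle ring ℤ[R₃] of the dihedral quandle R₃ of order three has only trivial idempotents: every idempotent of ℤ[R₃] is equal to e_x for some x ∈ R₃. -/
/-- The dihedral quandle operation on `ZMod n`: `i ∗ j = 2j - i`. -/
def dihedralOp (n : ℕ) : ZMod n → ZMod n → ZMod n := fun i j => 2 * j - i

/-!
Writing `u = a e₀ + b e₁ + c e₂`, idempotency of `u` in `ℤ[R₃]` is the system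
`a² + 2bc = a` together with its cyclic shifts. Summing gives `s² = s` for `s = a + b + c`, and
subtracting two equations gives `(a - b) (a + b - 2c - 1) = 0` and its shifts. Over `ℤ`, two
unequal coordinates force the third to be `(s - 1) / 3`, hence `s = 1` and the third vanishes;
so `u` is `0` or a basis element.
-/

theorem qmul_apply {X k : Type*} [Fintype X] [DecidableEq X] [CommRing k] (op : X → X → X)
    (f g : X →₀ k) (z : X) :
    qmul op f g z = ∑ x, ∑ y, if op x y = z then f x * g y else 0 := by
  rw [qmul, Finsupp.sum_fintype _ _ (fun _ => by simp [Finsupp.sum_fintype]),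
    Finsupp.finsetSum_apply]
  refine Finset.sum_congr rfl fun x _ => ?_
  rw [Finsupp.sum_fintype _ _ (fun _ => by simp), Finsupp.finsetSum_apply]
  exact Finset.sum_congr rfl fun y _ => Finsupp.single_apply

theorem ZMod.three_cases (z : ZMod 3) : z = 0 ∨ z = 1 ∨ z = 2 := by
  revert z; decide

theorem ZMod.sum_univ_three {M : Type*} [AddCommMonoid M] (f : ZMod 3 → M) :
    ∑ x, f x = f 0 + f 1 + f 2 :=
  Fin.sum_univ_three f

theorem ZMod.finsupp_ext_three {M : Type*} [Zero M] {v w : ZMod 3 →₀ M}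
    (h₀ : v 0 = w 0) (h₁ : v 1 = w 1) (h₂ : v 2 = w 2) : v = w := by
  ext z
  obtain rfl | rfl | rfl := ZMod.three_cases z
  exacts [h₀, h₁, h₂]

theorem qmul_dihedralOp_three_self_apply {k : Type*} [CommRing k] (u : ZMod 3 →₀ k)
    (z : ZMod 3) : qmul (dihedralOp 3) u u z = u z ^ 2 + 2 * u (z + 1) * u (z + 2) := by
  rw [qmul_apply]
  obtain rfl | rfl | rfl := ZMod.three_cases z
  all_goals
    simp +decide only [ZMod.sum_univ_three, dihedralOp, if_true, if_false]
    reduce_mod_char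
    ring

theorem Int.eq_zero_or_basis_of_dihedral_three_idempotent {a b c : ℤ}
    (ha : a ^ 2 + 2 * b * c = a) (hb : b ^ 2 + 2 * c * a = b) (hc : c ^ 2 + 2 * a * b = c) :
    a = 0 ∧ b = 0 ∧ c = 0 ∨ a = 1 ∧ b = 0 ∧ c = 0 ∨ a = 0 ∧ b = 1 ∧ c = 0 ∨
      a = 0 ∧ b = 0 ∧ c = 1 := by
  have hs : (a + b + c) * (a + b + c - 1) = 0 := by linear_combination ha + hb + hc
  have hab : (a - b) * (a + b - 2 * c - 1) = 0 := by linear_combination ha - hb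
  have hbc : (b - c) * (b + c - 2 * a - 1) = 0 := by linear_combination hb - hc
  have hca : (c - a) * (c + a - 2 * b - 1) = 0 := by linear_combination hc - ha
  rcases mul_eq_zero.1 hs with h | h <;> rcases mul_eq_zero.1 hab with h₁ | h₁ <;>
    rcases mul_eq_zero.1 hbc with h₂ | h₂ <;> rcases mul_eq_zero.1 hca with h₃ | h₃ <;>
    omega

/-- The integral quandle ring `ℤ[R₃]` of the dihedral quandle of order three has
only trivial idempotents. -/
theorem idempotents_of_int_quandle_ring_R3_trivial
    (u : ZMod 3 →₀ ℤ) (hu : u ≠ 0) (hid : qmul (dihedralOp 3) u u = u) :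
    ∃ x : ZMod 3, u = Finsupp.single x 1 := by
  have coord (z : ZMod 3) : u z ^ 2 + 2 * u (z + 1) * u (z + 2) = u z := by
    rw [← qmul_dihedralOp_three_self_apply, hid]
  have e₀ := coord 0
  have e₁ := coord 1
  have e₂ := coord 2
  reduce_mod_char at e₀ e₁ e₂
  rcases Int.eq_zero_or_basis_of_dihedral_three_idempotent e₀ e₁ e₂ with
    ⟨h₀, h₁, h₂⟩ | ⟨h₀, h₁, h₂⟩ | ⟨h₀, h₁, h₂⟩ | ⟨h₀, h₁, h₂⟩
  · exact absurd (ZMod.finsupp_ext_three h₀ h₁ h₂) hu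
  · exact ⟨0, ZMod.finsupp_ext_three (by simp [h₀]) (by simp +decide [h₁])
      (by simp +decide [h₂])⟩
  · exact ⟨1, ZMod.finsupp_ext_three (by simp +decide [h₀]) (by simp [h₁])
      (by simp +decide [h₂])⟩
  · exact ⟨2, ZMod.finsupp_ext_three (by simp +decide [h₀]) (by simp +decide [h₁])
      (by simp [h₂])⟩
end

section
/- Let X = {1,2,3,4,5} be the quandle with operation 1∗1=1∗2=1∗3=1, 1∗4=1∗5=2; 2∗1=2∗2=2∗3=2, 2∗4=2∗5=3; 3∗1=3∗2=3∗3=3, 3∗4=3∗5=1; 4∗1=4∗2=4∗3=5, 4∗4=4∗5=4; 5∗1=5∗2=5∗3=4, 5∗4=5∗5=5, and let I denote the set of idempotents of ℤ/2ℤ[X]. Then I is a medial quandle with respect to the ring multiplication: I is closed under multiplication, u·u = u for all u ∈ I, for each u ∈ I the map v ↦ v·u is a bijection of I, (u·v)·w = (u·w)·(v·w) for all u,v,w ∈ I, and (u·v)·(w·z) = (u·w)·(v·z) for all u,v,w,z ∈ I. -/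
/-- The order 5 quandle (elements `0,…,4` corresponding to `1,…,5`) with
multiplication table rows `(1,1,1,2,2), (2,2,2,3,3), (3,3,3,1,1),
(5,5,5,4,4), (4,4,4,5,5)`. -/
def op5 : Fin 5 → Fin 5 → Fin 5 := fun x y =>
  if y.val ≤ 2 then ![0, 1, 2, 4, 3] x else ![1, 2, 0, 3, 4] x

/-- The set of idempotents of `ℤ/2ℤ[X]` for the order 5 quandle above. -/
def I5 : Set (Fin 5 →₀ ZMod 2) := {u | u ≠ 0 ∧ qmul op5 u u = u}

/-! Auxiliary computable model. -/

/-- Computable version of `qmul` on plain functions. -/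
def pmul (f g : Fin 5 → ZMod 2) : Fin 5 → ZMod 2 := fun z =>
  ∑ x, ∑ y, if op5 x y = z then f x * g y else 0

/-- Computable idempotency predicate. -/
def P (f : Fin 5 → ZMod 2) : Prop := f ≠ 0 ∧ pmul f f = f

instance : DecidablePred P := fun f => by unfold P; infer_instance

/-- The ten idempotents. -/
def L : Fin 10 → Fin 5 → ZMod 2 :=
  ![![1,0,0,0,0], ![0,1,0,0,0], ![0,0,1,0,0], ![1,1,1,0,0], ![0,0,0,1,0],
    ![0,0,0,0,1], ![1,0,0,1,1], ![0,1,0,1,1], ![0,0,1,1,1], ![1,1,1,1,1]]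

/-- Multiplication table of the idempotents. -/
def t : Fin 10 → Fin 10 → Fin 10 :=
  ![![0,0,0,0,1,1,0,0,0,0], ![1,1,1,1,2,2,1,1,1,1], ![2,2,2,2,0,0,2,2,2,2],
    ![3,3,3,3,3,3,3,3,3,3], ![5,5,5,5,4,4,5,5,5,5], ![4,4,4,4,5,5,4,4,4,4],
    ![6,6,6,6,7,7,6,6,6,6], ![7,7,7,7,8,8,7,7,7,7], ![8,8,8,8,6,6,8,8,8,8],
    ![9,9,9,9,9,9,9,9,9,9]]

lemma qmul_apply_s4 (f g : Fin 5 →₀ ZMod 2) (z : Fin 5) :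
    qmul op5 f g z = pmul (⇑f) (⇑g) z := by
  classical
  rw [qmul, pmul]
  rw [Finsupp.sum_fintype _ _ (by simp [Finsupp.sum])]
  rw [Finset.sum_apply']
  refine Finset.sum_congr rfl fun x _ => ?_
  rw [Finsupp.sum_fintype _ _ (by simp)]
  rw [Finset.sum_apply']
  refine Finset.sum_congr rfl fun y _ => ?_
  rw [Finsupp.single_apply]

lemma coe_qmul (f g : Fin 5 →₀ ZMod 2) : ⇑(qmul op5 f g) = pmul (⇑f) (⇑g) :=
  funext (qmul_apply_s4 f g)

lemma mem_I5 (u : Fin 5 →₀ ZMod 2) : u ∈ I5 ↔ P ⇑u := by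
  constructor
  · rintro ⟨h1, h2⟩
    refine ⟨fun h => h1 (DFunLike.coe_injective (by simpa using h)), ?_⟩
    rw [← coe_qmul, h2]
  · rintro ⟨h1, h2⟩
    refine ⟨fun h => h1 (by simp [h]), ?_⟩
    apply DFunLike.coe_injective
    show ⇑(qmul op5 u u) = ⇑u
    rw [coe_qmul]; exact h2

lemma hL : ∀ f : Fin 5 → ZMod 2, P f → ∃ i, f = L i := by decide

lemma hPL : ∀ i, P (L i) := by decide

lemma ht : ∀ i j, pmul (L i) (L j) = L (t i j) := by decide

lemma key1 : ∀ f g : Fin 5 → ZMod 2, P f → P g → P (pmul f g) := by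
  intro f g hf hg
  obtain ⟨i, rfl⟩ := hL f hf
  obtain ⟨j, rfl⟩ := hL g hg
  rw [ht]; exact hPL _

lemma key2 : ∀ f g h : Fin 5 → ZMod 2, P f → P g → P h →
    pmul f h = pmul g h → f = g := by
  have tinj : ∀ i j k : Fin 10, t i k = t j k → i = j := by decide
  have Linj : ∀ i j : Fin 10, L i = L j → i = j := by decide
  intro f g h hf hg hh e
  obtain ⟨i, rfl⟩ := hL f hf
  obtain ⟨j, rfl⟩ := hL g hg
  obtain ⟨k, rfl⟩ := hL h hh
  rw [ht, ht] at e
  exact congrArg L (tinj i j k (Linj _ _ e))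

lemma key3 : ∀ h u : Fin 5 → ZMod 2, P h → P u → ∃ f, P f ∧ pmul f u = h := by
  have tsurj : ∀ a b : Fin 10, ∃ i, t i b = a := by decide
  intro h u hh hu
  obtain ⟨a, rfl⟩ := hL h hh
  obtain ⟨b, rfl⟩ := hL u hu
  obtain ⟨i, hi⟩ := tsurj a b
  exact ⟨L i, hPL i, by rw [ht, hi]⟩

lemma key4 : ∀ f g h : Fin 5 → ZMod 2, P f → P g → P h →
    pmul (pmul f g) h = pmul (pmul f h) (pmul g h) := by
  have trd : ∀ i j k : Fin 10, t (t i j) k = t (t i k) (t j k) := by decide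
  intro f g h hf hg hh
  obtain ⟨i, rfl⟩ := hL f hf
  obtain ⟨j, rfl⟩ := hL g hg
  obtain ⟨k, rfl⟩ := hL h hh
  rw [ht, ht, ht, ht, ht, trd]

lemma key5 : ∀ f g h k : Fin 5 → ZMod 2, P f → P g → P h → P k →
    pmul (pmul f g) (pmul h k) = pmul (pmul f h) (pmul g k) := by
  have tmed : ∀ i j a b : Fin 10, t (t i j) (t a b) = t (t i a) (t j b) := by decide
  intro f g h k hf hg hh hk
  obtain ⟨i, rfl⟩ := hL f hf
  obtain ⟨j, rfl⟩ := hL g hg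
  obtain ⟨a, rfl⟩ := hL h hh
  obtain ⟨b, rfl⟩ := hL k hk
  rw [ht, ht, ht, ht, ht, ht, tmed]

/-- The set of idempotents of `ℤ/2ℤ[X]` for the order 5 quandle above is a
medial quandle under the ring multiplication: it is closed under
multiplication, every element is idempotent, right multiplications are
bijections of it, it is right distributive, and it is medial. -/
theorem idempotents_mod_two_order_five_quandle_is_medial_quandle :
    (∀ u ∈ I5, ∀ v ∈ I5, qmul op5 u v ∈ I5) ∧
    (∀ u ∈ I5, qmul op5 u u = u) ∧
    (∀ u ∈ I5, Set.BijOn (fun v => qmul op5 v u) I5 I5) ∧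
    (∀ u ∈ I5, ∀ v ∈ I5, ∀ w ∈ I5,
      qmul op5 (qmul op5 u v) w = qmul op5 (qmul op5 u w) (qmul op5 v w)) ∧
    (∀ u ∈ I5, ∀ v ∈ I5, ∀ w ∈ I5, ∀ z ∈ I5,
      qmul op5 (qmul op5 u v) (qmul op5 w z)
        = qmul op5 (qmul op5 u w) (qmul op5 v z)) := by
  have closed : ∀ u ∈ I5, ∀ v ∈ I5, qmul op5 u v ∈ I5 := by
    intro u hu v hv
    rw [mem_I5] at *
    rw [coe_qmul]
    exact key1 _ _ hu hv
  refine ⟨closed, fun u hu => hu.2, ?_, ?_, ?_⟩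
  · intro u hu
    refine ⟨fun v hv => closed v hv u hu, ?_, ?_⟩
    · intro v hv w hw h
      apply DFunLike.coe_injective
      have e : pmul ⇑v ⇑u = pmul ⇑w ⇑u := by
        rw [← coe_qmul, ← coe_qmul]
        exact congrArg _ h
      exact key2 _ _ _ ((mem_I5 v).1 hv) ((mem_I5 w).1 hw) ((mem_I5 u).1 hu) e
    · intro w hw
      obtain ⟨f, hf, hfu⟩ := key3 ⇑w ⇑u ((mem_I5 w).1 hw) ((mem_I5 u).1 hu)
      refine ⟨Finsupp.equivFunOnFinite.symm f, ?_, ?_⟩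
      · rw [mem_I5]
        simpa using hf
      · apply DFunLike.coe_injective
        simp only [coe_qmul]
        simpa using hfu
  · intro u hu v hv w hw
    apply DFunLike.coe_injective
    simp only [coe_qmul]
    exact key4 _ _ _ ((mem_I5 u).1 hu) ((mem_I5 v).1 hv) ((mem_I5 w).1 hw)
  · intro u hu v hv w hw z hz
    apply DFunLike.coe_injective
    simp only [coe_qmul]
    exact key5 _ _ _ _ ((mem_I5 u).1 hu) ((mem_I5 v).1 hv) ((mem_I5 w).1 hw) ((mem_I5 z).1 hz)
end

section
/- Let X be a medial quandle, k a commutative ring, and w an idempotent of the quandle ring k[X]. Then (u·v)·w = (u·w)·(v·w) and w·(u·v) = (w·u)·(w·v) for all u, v ∈ k[X]. -/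
/-! The identity `(u·v)·w = (u·v)·(w·w) = (u·w)·(v·w)` (and its mirror image) only needs `w·w = w`
and mediality of the quandle ring, which follows from mediality of `X` by bilinearity. -/

section QuandleRing

variable {X : Type*} {k : Type*} [CommRing k] (op : X → X → X)

theorem qmul_zero_left (g : X →₀ k) : qmul op 0 g = 0 := by
  simp [qmul]

theorem qmul_zero_right (f : X →₀ k) : qmul op f 0 = 0 := by
  simp [qmul]

theorem qmul_add_left (f f' g : X →₀ k) :
    qmul op (f + f') g = qmul op f g + qmul op f' g := by
  unfold qmul
  apply Finsupp.sum_add_index' <;> intros <;>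
    simp [add_mul, Finsupp.single_add, Finsupp.sum_add]

theorem qmul_add_right (f g g' : X →₀ k) :
    qmul op f (g + g') = qmul op f g + qmul op f g' := by
  unfold qmul
  rw [← Finsupp.sum_add]
  refine Finsupp.sum_congr fun x _ => ?_
  apply Finsupp.sum_add_index' <;> intros <;>
    simp [mul_add, Finsupp.single_add]

theorem qmul_single_single (x y : X) (a b : k) :
    qmul op (Finsupp.single x a) (Finsupp.single y b) = Finsupp.single (op x y) (a * b) := by
  simp [qmul]

theorem qmul_medial (hmedial : ∀ x y z w, op (op x y) (op z w) = op (op x z) (op y w))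
    (u v z t : X →₀ k) :
    qmul op (qmul op u v) (qmul op z t) = qmul op (qmul op u z) (qmul op v t) := by
  induction u using Finsupp.induction_linear with
  | zero => simp only [qmul_zero_left]
  | add u₁ u₂ h₁ h₂ => simp only [qmul_add_left, h₁, h₂]
  | single x a =>
  induction v using Finsupp.induction_linear with
  | zero => simp only [qmul_zero_left, qmul_zero_right]
  | add v₁ v₂ h₁ h₂ => simp only [qmul_add_left, qmul_add_right, h₁, h₂]
  | single y b =>
  induction z using Finsupp.induction_linear with
  | zero => simp only [qmul_zero_left, qmul_zero_right]
  | add z₁ z₂ h₁ h₂ => simp only [qmul_add_left, qmul_add_right, h₁, h₂]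
  | single p c =>
  induction t using Finsupp.induction_linear with
  | zero => simp only [qmul_zero_right]
  | add t₁ t₂ h₁ h₂ => simp only [qmul_add_right, h₁, h₂]
  | single q d => simp only [qmul_single_single, hmedial, mul_mul_mul_comm]

end QuandleRing

theorem mul_by_idempotent_distributive_of_medial_general {X : Type*} {k : Type*} [CommRing k]
    (op : X → X → X)
    (hmedial : ∀ x y z w, op (op x y) (op z w) = op (op x z) (op y w))
    (w : X →₀ k) (hw : qmul op w w = w) :
    ∀ u v : X →₀ k,
      qmul op (qmul op u v) w = qmul op (qmul op u w) (qmul op v w) ∧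
      qmul op w (qmul op u v) = qmul op (qmul op w u) (qmul op w v) := by
  intro u v
  have right := qmul_medial op hmedial u v w w
  have left := qmul_medial op hmedial w w u v
  rw [hw] at right left
  exact ⟨right, left⟩

/-- If `X` is a medial quandle, `k` a commutative ring and `w` an idempotent of
the quandle ring `k[X]`, then right and left multiplications by `w` are
distributive with respect to the ring multiplication. -/
theorem mul_by_idempotent_distributive_of_medial {X : Type*} {k : Type*} [CommRing k]
    (op : X → X → X)
    (hidem : ∀ x, op x x = x)
    (hbij : ∀ y, Function.Bijective (fun x => op x y))
    (hdist : ∀ x y z, op (op x y) z = op (op x z) (op y z))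
    (hmedial : ∀ x y z w, op (op x y) (op z w) = op (op x z) (op y w))
    (w : X →₀ k) (hw0 : w ≠ 0) (hw : qmul op w w = w) :
    ∀ u v : X →₀ k,
      qmul op (qmul op u v) w = qmul op (qmul op u w) (qmul op v w) ∧
      qmul op w (qmul op u v) = qmul op (qmul op w u) (qmul op w v) :=
  mul_by_idempotent_distributive_of_medial_general op hmedial w hw
end

section
/- Let X be a nonempty quandle, k an integral domain, and I the set of idempotents of the quandle ring k[X]. Suppose I is closed under the ring multiplication and, for every u ∈ I, the map v ↦ v·u is a surjection of I onto I (as holds when I is a quandle with respect to the ring multiplication). Then every idempotent of k[X] has augmentation value 1, i.e. ε(u) = 1 for all u ∈ I. -/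
/-- The augmentation map `k[X] → k`, `∑ α_x e_x ↦ ∑ α_x`. -/
noncomputable def aug {X : Type*} {k : Type*} [CommRing k] (f : X →₀ k) : k :=
  f.sum fun _ a => a

lemma qmul_single {X : Type*} {k : Type*} [CommRing k] (op : X → X → X)
    (x y : X) (a b : k) :
    qmul op (Finsupp.single x a) (Finsupp.single y b)
      = Finsupp.single (op x y) (a * b) := by
  rw [qmul, Finsupp.sum_single_index (by simp), Finsupp.sum_single_index (by simp)]

lemma aug_single {X : Type*} {k : Type*} [CommRing k] (x : X) (a : k) :
    aug (Finsupp.single x a) = a := by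
  rw [aug, Finsupp.sum_single_index rfl]

lemma sum_id_single {X : Type*} {k : Type*} [CommRing k] (z : X) (c : k) :
    ((Finsupp.single z c).sum fun _ d => d) = c :=
  Finsupp.sum_single_index rfl

lemma aug_mul {X : Type*} {k : Type*} [CommRing k] (op : X → X → X) (f g : X →₀ k) :
    aug (qmul op f g) = aug f * aug g := by
  rw [aug, qmul, Finsupp.sum_sum_index (fun _ => rfl) (fun _ _ _ => rfl)]
  have : ∀ (x : X) (a : k),
      ((g.sum fun y b => Finsupp.single (op x y) (a * b)).sum fun _ c => c)
        = a * aug g := by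
    intro x a
    rw [Finsupp.sum_sum_index (fun _ => rfl) (fun _ _ _ => rfl)]
    simp only [sum_id_single]
    rw [aug, Finsupp.mul_sum]
  simp only [this]
  simp only [aug]
  rw [Finsupp.sum_mul]

/-- If `X` is a nonempty quandle, `k` an integral domain, and the set `I` of
idempotents of `k[X]` is closed under the ring multiplication with every right
multiplication by an element of `I` surjective on `I`, then every idempotent
has augmentation value `1`. -/
theorem augmentation_one_of_idempotent_quandle {X : Type*} {k : Type*}
    [CommRing k] [IsDomain k] [Nonempty X]
    (op : X → X → X)
    (hidem : ∀ x, op x x = x)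
    (hbij : ∀ y, Function.Bijective (fun x => op x y))
    (hdist : ∀ x y z, op (op x y) z = op (op x z) (op y z))
    (hclosed : ∀ u ∈ {u : X →₀ k | u ≠ 0 ∧ qmul op u u = u},
      ∀ v ∈ {u : X →₀ k | u ≠ 0 ∧ qmul op u u = u},
      qmul op u v ∈ {u : X →₀ k | u ≠ 0 ∧ qmul op u u = u})
    (hsurj : ∀ u ∈ {u : X →₀ k | u ≠ 0 ∧ qmul op u u = u},
      Set.SurjOn (fun v => qmul op v u)
        {u : X →₀ k | u ≠ 0 ∧ qmul op u u = u}
        {u : X →₀ k | u ≠ 0 ∧ qmul op u u = u}) :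
    ∀ u ∈ {u : X →₀ k | u ≠ 0 ∧ qmul op u u = u}, aug u = 1 := by
  intro u hu
  obtain ⟨hu0, huu⟩ := hu
  -- aug u is idempotent in k
  have haug : aug u * aug u = aug u := by
    conv_rhs => rw [← huu]
    rw [aug_mul]
  -- the basis element e_x is an idempotent
  obtain ⟨x⟩ := ‹Nonempty X›
  have hex : (Finsupp.single x (1 : k)) ∈ {u : X →₀ k | u ≠ 0 ∧ qmul op u u = u} := by
    constructor
    · simp [Finsupp.single_eq_zero]
    · rw [qmul_single, hidem, mul_one]
  -- surjectivity: some idempotent v with v * u = e_x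
  obtain ⟨v, hv, hvu⟩ := hsurj u ⟨hu0, huu⟩ hex
  simp only at hvu
  have h1 : aug v * aug u = 1 := by rw [← aug_mul op v u, hvu, aug_single]
  have hne : aug u ≠ 0 := by
    intro h
    rw [h, mul_zero] at h1
    exact zero_ne_one h1
  exact mul_left_cancel₀ hne (by rw [haug, mul_one])
end

section
/- Let X and Y be quandles with Y medial, and let Hom(X,Y) denote the set of quandle homomorphisms from X to Y equipped with the pointwise product (f∗g)(x) = f(x)∗g(x). Then Hom(X,Y) is a medial quandle: f∗f = f for every f ∈ Hom(X,Y), for each g ∈ Hom(X,Y) the map f ↦ f∗g is a bijection of Hom(X,Y), (f∗g)∗h = (f∗h)∗(g∗h) for all f,g,h ∈ Hom(X,Y), and (f∗g)∗(h∗l) = (f∗h)∗(g∗l) for all f,g,h,l ∈ Hom(X,Y). -/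
/-- The set of quandle homomorphisms between two binary structures. -/
def QHom {X Y : Type*} (opX : X → X → X) (opY : Y → Y → Y) : Set (X → Y) :=
  {f | ∀ x y, f (opX x y) = opY (f x) (f y)}

/-- The pointwise product of maps `X → Y`. -/
def pprod {X Y : Type*} (opY : Y → Y → Y) (f g : X → Y) : X → Y :=
  fun x => opY (f x) (g x)

/-- If `X` and `Y` are quandles with `Y` medial, then the set `Hom(X,Y)` of
quandle homomorphisms is a medial quandle under the pointwise product: it is
closed under the product, every element is idempotent, right multiplications
are bijections of it, it is right distributive, and it is medial. -/
theorem hom_quandle_is_medial_quandle {X Y : Type*}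
    (opX : X → X → X)
    (hXidem : ∀ x, opX x x = x)
    (hXbij : ∀ y, Function.Bijective (fun x => opX x y))
    (hXdist : ∀ x y z, opX (opX x y) z = opX (opX x z) (opX y z))
    (opY : Y → Y → Y)
    (hYidem : ∀ x, opY x x = x)
    (hYbij : ∀ y, Function.Bijective (fun x => opY x y))
    (hYdist : ∀ x y z, opY (opY x y) z = opY (opY x z) (opY y z))
    (hYmedial : ∀ x y z w, opY (opY x y) (opY z w) = opY (opY x z) (opY y w)) :
    (∀ f ∈ QHom opX opY, ∀ g ∈ QHom opX opY, pprod opY f g ∈ QHom opX opY) ∧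
    (∀ f ∈ QHom opX opY, pprod opY f f = f) ∧
    (∀ g ∈ QHom opX opY,
      Set.BijOn (fun f => pprod opY f g) (QHom opX opY) (QHom opX opY)) ∧
    (∀ f ∈ QHom opX opY, ∀ g ∈ QHom opX opY, ∀ h ∈ QHom opX opY,
      pprod opY (pprod opY f g) h = pprod opY (pprod opY f h) (pprod opY g h)) ∧
    (∀ f ∈ QHom opX opY, ∀ g ∈ QHom opX opY, ∀ h ∈ QHom opX opY, ∀ l ∈ QHom opX opY,
      pprod opY (pprod opY f g) (pprod opY h l)
        = pprod opY (pprod opY f h) (pprod opY g l)) := by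

  classical
  have closed : ∀ f ∈ QHom opX opY, ∀ g ∈ QHom opX opY, pprod opY f g ∈ QHom opX opY := by
    intro f hf g hg x y
    simp only [pprod]
    rw [hf, hg, hYmedial]
  refine ⟨closed, ?_, ?_, ?_, ?_⟩
  · intro f hf
    funext x
    exact hYidem _
  · intro g hg
    refine ⟨fun f hf => closed f hf g hg, ?_, ?_⟩
    · intro f hf f' hf' h
      funext x
      have := congrFun h x
      exact (hYbij (g x)).1 this
    · intro h hh
      set f : X → Y := fun x => Function.surjInv (hYbij (g x)).2 (h x) with hfdef
      have key : ∀ x, opY (f x) (g x) = h x := fun x =>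
        Function.surjInv_eq (hYbij (g x)).2 (h x)
      have hfhom : f ∈ QHom opX opY := by
        intro x y
        apply (hYbij (g (opX x y))).1
        show opY (f (opX x y)) (g (opX x y)) = opY (opY (f x) (f y)) (g (opX x y))
        rw [key, hh, hg, ← key x, ← key y, hYmedial]
      refine ⟨f, hfhom, ?_⟩
      funext x
      exact key x
  · intro f _ g _ h _
    funext x
    exact hYdist _ _ _
  · intro f _ g _ h _ l _
    funext x
    exact hYmedial _ _ _ _
end

section
/- Let n ≥ 3 be an odd integer and k an integral domain. If the quandle ring k[R_n] of the dihedral quandle R_n has only trivial idempotents, then the set of idempotents of k[R_{2n}] equals { β e_j + (1−β) e_{n+j} + ∑_{i=0}^{n−1} α_i (e_i − e_{n+i} + e_{2j−i} − e_{n+2j−i}) : 0 ≤ j ≤ n−1 and α_0, …, α_{n−1}, β ∈ k }, where all subscripts are taken modulo 2n. -/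
/-
Reduction mod `n` is a quandle map `R_{2n} → R_n`, so it sends an idempotent `u` of `k[R_{2n}]`
to an idempotent of `k[R_n]`. In `k[R_m]` the product `u · v = ∑ u_x v_y e_{2y-x}` depends on `v`
only through its push-forward under doubling, and on `ZMod (2n)` doubling factors through
reduction mod `n`. Hence the image of `u` cannot vanish (else `u = u · u = 0`), so it is some
`e_j`, and then `u · u` is the reflection of `u` about `j`. Thus the idempotents are exactly the
`u` lying over `e_j` and symmetric about `j`. For such `u` and `β = u_j`, the difference
`w = u - β e_j - (1 - β) e_{n+j}` satisfies `w_{y+n} = -w_y`, is symmetric about `j` and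
vanishes over `j`. As `n` is odd, `j` is the only fixed point of the reflection `a ↦ 2j - a` of
`ZMod n`; choosing one point of each remaining orbit writes `w` as `∑ α_i (e_i - e_{n+i})` plus
its reflection, which is the claimed normal form.
-/

open Finsupp

theorem mapDomain_qmul {X Y k : Type*} [CommRing k] {opX : X → X → X} {opY : Y → Y → Y}
    (f : X → Y) (hf : ∀ x y, f (opX x y) = opY (f x) (f y)) (u v : X →₀ k) :
    mapDomain f (qmul opX u v) = qmul opY (mapDomain f u) (mapDomain f v) := by
  simp only [qmul, mapDomain_sum, mapDomain_single]
  rw [sum_mapDomain_index (by simp) (fun _ _ _ => by simp only [add_mul, single_add, sum_add])]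
  refine sum_congr fun x _ => ?_
  rw [sum_mapDomain_index (by simp) (fun _ _ _ => by simp only [mul_add, single_add])]
  simp only [hf]

section Dihedral

variable {m : ℕ} {k : Type*} [CommRing k]

theorem qmul_dihedralOp (f g : ZMod m →₀ k) :
    qmul (dihedralOp m) f g =
      f.sum fun x a => a • mapDomain (· - x) (mapDomain (2 * ·) g) := by
  simp only [qmul, dihedralOp, ← mapDomain_comp]
  refine sum_congr fun x _ => ?_
  simp [mapDomain, smul_sum]

theorem qmul_dihedralOp_eq_zero {f g : ZMod m →₀ k} (hg : mapDomain (2 * ·) g = 0) :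
    qmul (dihedralOp m) f g = 0 := by
  simp [qmul_dihedralOp, hg]

theorem qmul_dihedralOp_eq_mapDomain {f g : ZMod m →₀ k} {c : ZMod m}
    (hg : mapDomain (2 * ·) g = single c 1) :
    qmul (dihedralOp m) f g = mapDomain (c - ·) f := by
  rw [qmul_dihedralOp, hg, mapDomain]
  simp

theorem mapDomain_sub_left_apply (c : ZMod m) (v : ZMod m →₀ k) (y : ZMod m) :
    mapDomain (c - ·) v y = v (c - y) := by
  simpa using mapDomain_apply (sub_right_injective (b := c)) v (c - y)

theorem mapDomain_sub_left_mapDomain_sub_left (c : ZMod m) (v : ZMod m →₀ k) :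
    mapDomain (c - ·) (mapDomain (c - ·) v) = v := by
  ext y
  simp [mapDomain_sub_left_apply]

end Dihedral

section DoubleCover

variable (n : ℕ) {k : Type*} [CommRing k]

abbrev doubleCoverHom : ZMod (2 * n) →+* ZMod n := ZMod.castHom (dvd_mul_left n 2) (ZMod n)

theorem natCast_add_natCast_self : (n : ZMod (2 * n)) + n = 0 := by
  rw [← Nat.cast_add, ← two_mul, ZMod.natCast_self]

theorem doubleCoverHom_two_mul_sub (c y : ZMod (2 * n)) :
    doubleCoverHom n (2 * c - y) = 2 * doubleCoverHom n c - doubleCoverHom n y := by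
  simp only [map_sub, map_mul, map_ofNat]

theorem dihedralOp_doubleCoverHom (x y : ZMod (2 * n)) :
    doubleCoverHom n (dihedralOp (2 * n) x y) =
      dihedralOp n (doubleCoverHom n x) (doubleCoverHom n y) :=
  doubleCoverHom_two_mul_sub n y x

variable [NeZero n]

theorem natCast_add_ne_self (y : ZMod (2 * n)) : (n : ZMod (2 * n)) + y ≠ y := by
  rw [Ne, add_eq_right, ZMod.natCast_eq_zero_iff]
  intro h
  have := Nat.le_of_dvd (NeZero.pos n) h
  have := NeZero.pos n
  omega

theorem doubleCoverHom_eq_zero_iff {y : ZMod (2 * n)} :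
    doubleCoverHom n y = 0 ↔ y = 0 ∨ y = n := by
  refine ⟨fun h => ?_, by rintro (rfl | rfl) <;> simp⟩
  rw [← ZMod.natCast_zmod_val y, map_natCast, ZMod.natCast_eq_zero_iff] at h
  obtain ⟨q, hq⟩ := h
  have hq2 : q < 2 := by
    by_contra! h
    have := Nat.mul_le_mul_left n h
    have := ZMod.val_lt y
    omega
  rw [← ZMod.natCast_zmod_val y, hq]
  interval_cases q <;> simp

theorem doubleCoverHom_eq_iff {y z : ZMod (2 * n)} :
    doubleCoverHom n y = doubleCoverHom n z ↔ y = z ∨ y = z + n := by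
  rw [← sub_eq_zero, ← map_sub, doubleCoverHom_eq_zero_iff, sub_eq_zero, sub_eq_iff_eq_add']

theorem mapDomain_doubleCoverHom_apply (u : ZMod (2 * n) →₀ k) (y : ZMod (2 * n)) :
    mapDomain (doubleCoverHom n) u (doubleCoverHom n y) = u y + u (y + n) := by
  classical
  induction u using Finsupp.induction_linear with
  | zero => simp
  | add f g hf hg => simp only [mapDomain_add, Finsupp.add_apply, hf, hg]; abel
  | single x b =>
    have hne : y ≠ y + n := by simpa [add_comm, eq_comm] using natCast_add_ne_self n y
    simp only [mapDomain_single, single_apply, doubleCoverHom_eq_iff]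
    rcases eq_or_ne x y with rfl | hxy
    · simp [hne]
    · by_cases hx : x = y + n <;> simp [hx, hxy, hne.symm]

def twiceLift (a : ZMod n) : ZMod (2 * n) := 2 * (a.val : ZMod (2 * n))

theorem twiceLift_doubleCoverHom (y : ZMod (2 * n)) :
    twiceLift n (doubleCoverHom n y) = 2 * y := by
  rw [twiceLift, ← ZMod.natCast_zmod_val y, map_natCast, ZMod.val_natCast]
  exact_mod_cast (ZMod.natCast_eq_natCast_iff _ _ _).2 ((Nat.mod_modEq _ n).mul_left' 2)

theorem mapDomain_two_mul (u : ZMod (2 * n) →₀ k) :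
    mapDomain (2 * ·) u = mapDomain (twiceLift n) (mapDomain (doubleCoverHom n) u) := by
  rw [← mapDomain_comp]
  congr 1
  funext y
  exact (twiceLift_doubleCoverHom n y).symm

end DoubleCover

section Idempotents

variable {n : ℕ} {k : Type*} [CommRing k]

def IsSymmetricOver (c : ZMod (2 * n)) (u : ZMod (2 * n) →₀ k) : Prop :=
  mapDomain (doubleCoverHom n) u = single (doubleCoverHom n c) 1 ∧ mapDomain (2 * c - ·) u = u

variable [NeZero n]

theorem IsSymmetricOver.qmul_self {c : ZMod (2 * n)} {u : ZMod (2 * n) →₀ k}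
    (hu : IsSymmetricOver c u) : qmul (dihedralOp (2 * n)) u u = u := by
  rw [qmul_dihedralOp_eq_mapDomain (c := 2 * c), hu.2]
  rw [mapDomain_two_mul, hu.1, mapDomain_single, twiceLift_doubleCoverHom]

theorem exists_isSymmetricOver_of_qmul_self
    (htriv : ∀ u : ZMod n →₀ k, u ≠ 0 → qmul (dihedralOp n) u u = u →
      ∃ x : ZMod n, u = single x 1)
    {u : ZMod (2 * n) →₀ k} (hu : u ≠ 0) (hsq : qmul (dihedralOp (2 * n)) u u = u) :
    ∃ j < n, IsSymmetricOver (j : ZMod (2 * n)) u := by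
  have hidem : qmul (dihedralOp n) (mapDomain (doubleCoverHom n) u)
      (mapDomain (doubleCoverHom n) u) = mapDomain (doubleCoverHom n) u := by
    rw [← mapDomain_qmul _ (dihedralOp_doubleCoverHom n), hsq]
  have hne : mapDomain (doubleCoverHom n) u ≠ 0 := by
    intro h0
    apply hu
    rw [← hsq]
    exact qmul_dihedralOp_eq_zero (by rw [mapDomain_two_mul, h0, mapDomain_zero])
  obtain ⟨a, ha⟩ := htriv _ hne hidem
  have hdouble : mapDomain (2 * ·) u = single (twiceLift n a) 1 := by
    rw [mapDomain_two_mul, ha, mapDomain_single]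
  refine ⟨a.val, ZMod.val_lt a, by simp [ha], ?_⟩
  conv_rhs => rw [← hsq]
  exact (qmul_dihedralOp_eq_mapDomain hdouble).symm

theorem ne_zero_and_qmul_self_iff [Nontrivial k]
    (htriv : ∀ u : ZMod n →₀ k, u ≠ 0 → qmul (dihedralOp n) u u = u →
      ∃ x : ZMod n, u = single x 1)
    (u : ZMod (2 * n) →₀ k) :
    u ≠ 0 ∧ qmul (dihedralOp (2 * n)) u u = u ↔
      ∃ j < n, IsSymmetricOver (j : ZMod (2 * n)) u := by
  refine ⟨fun ⟨hu, hsq⟩ => exists_isSymmetricOver_of_qmul_self htriv hu hsq, ?_⟩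
  rintro ⟨j, -, hj⟩
  refine ⟨?_, hj.qmul_self⟩
  rintro rfl
  exact one_ne_zero (single_eq_zero.1 (hj.1.symm.trans mapDomain_zero))

end Idempotents

section NormalForm

variable {n : ℕ} {k : Type*} [CommRing k]

variable (n) in
noncomputable def fiberDiff (α : ℕ → k) : ZMod (2 * n) →₀ k :=
  ∑ i ∈ Finset.range n, α i • (single (i : ZMod (2 * n)) 1 - single ((n : ZMod (2 * n)) + i) 1)

theorem mapDomain_doubleCoverHom_fiberDiff (α : ℕ → k) :
    mapDomain (doubleCoverHom n) (fiberDiff n α) = 0 := by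
  simp [fiberDiff, mapDomain_finsetSum, mapDomain_smul, mapDomain_sub]

theorem fiberDiff_apply [NeZero n] {w : ZMod (2 * n) →₀ k} (hw : ∀ y, w (y + n) = -w y)
    (h : ZMod n → k) (y : ZMod (2 * n)) :
    fiberDiff n (fun i => h i * w i) y = h (doubleCoverHom n y) * w y := by
  classical
  set m := (doubleCoverHom n y).val
  have hm : doubleCoverHom n (m : ZMod (2 * n)) = doubleCoverHom n y := by simp [m]
  have hindex : ∀ i < n, doubleCoverHom n (i : ZMod (2 * n)) = doubleCoverHom n y → i = m := by
    intro i hi hiy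
    rw [map_natCast] at hiy
    simp [m, ← hiy, ZMod.val_natCast_of_lt hi]
  simp only [fiberDiff, finsetSum_apply, Finsupp.smul_apply, Finsupp.sub_apply, single_apply,
    smul_eq_mul]
  rw [Finset.sum_eq_single_of_mem m (Finset.mem_range.2 (ZMod.val_lt _))]
  · have hne := natCast_add_ne_self n m
    rcases (doubleCoverHom_eq_iff n).1 hm with hy | hy
    · simp [← hy, hne]
    · rw [show y = m + n by linear_combination -hy - natCast_add_natCast_self n, hw]
      simp [hne.symm, add_comm]
  · intro i hi him
    have hi := Finset.mem_range.1 hi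
    rw [if_neg (fun h => him (hindex i hi (by rw [h]))),
      if_neg (fun h => him (hindex i hi (by simp [← h]))), sub_zero, mul_zero]

theorem sum_smul_template (c : ZMod (2 * n)) (α : ℕ → k) :
    ∑ i ∈ Finset.range n, α i • (single (i : ZMod (2 * n)) 1 - single ((n : ZMod (2 * n)) + i) 1
        + single (2 * c - i) 1 - single ((n : ZMod (2 * n)) + 2 * c - i) 1) =
      fiberDiff n α + mapDomain (2 * c - ·) (fiberDiff n α) := by
  simp only [fiberDiff, mapDomain_finsetSum, mapDomain_smul, mapDomain_sub, mapDomain_single,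
    ← Finset.sum_add_distrib, ← smul_add]
  refine Finset.sum_congr rfl fun i _ => ?_
  rw [show 2 * c - (n + i) = n + 2 * c - i by linear_combination -natCast_add_natCast_self n,
    add_sub_assoc]

theorem isSymmetricOver_base (c : ZMod (2 * n)) (β : k) :
    IsSymmetricOver c (single c β + single ((n : ZMod (2 * n)) + c) (1 - β)) := by
  constructor
  · rw [mapDomain_add, mapDomain_single, mapDomain_single, map_add, map_natCast,
      ZMod.natCast_self, zero_add, ← single_add, add_sub_cancel]
  · rw [mapDomain_add, mapDomain_single, mapDomain_single, show 2 * c - c = c by ring,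
      show 2 * c - (n + c) = n + c by linear_combination -natCast_add_natCast_self n]

theorem IsSymmetricOver.add_fiberDiff {c : ZMod (2 * n)} {u : ZMod (2 * n) →₀ k}
    (hu : IsSymmetricOver c u) (α : ℕ → k) :
    IsSymmetricOver c (u + (fiberDiff n α + mapDomain (2 * c - ·) (fiberDiff n α))) := by
  have hcomm : doubleCoverHom n ∘ (2 * c - ·) =
      (2 * doubleCoverHom n c - ·) ∘ doubleCoverHom n :=
    funext (doubleCoverHom_two_mul_sub n c)
  constructor
  · rw [mapDomain_add, mapDomain_add, ← mapDomain_comp, hcomm, mapDomain_comp,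
      mapDomain_doubleCoverHom_fiberDiff, mapDomain_zero, hu.1, add_zero, add_zero]
  · rw [mapDomain_add, mapDomain_add, mapDomain_sub_left_mapDomain_sub_left, hu.2,
      add_comm (fiberDiff n α)]

theorem exists_eq_fiberDiff_add_mapDomain (hodd : Odd n) {c : ZMod (2 * n)}
    {w : ZMod (2 * n) →₀ k} (hπ : mapDomain (doubleCoverHom n) w = 0)
    (hr : mapDomain (2 * c - ·) w = w) (hc : w c = 0) :
    ∃ α, w = fiberDiff n α + mapDomain (2 * c - ·) (fiberDiff n α) := by
  have : NeZero n := ⟨hodd.pos.ne'⟩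
  have hw : ∀ y, w (y + n) = -w y := fun y => eq_neg_of_add_eq_zero_right <| by
    rw [← mapDomain_doubleCoverHom_apply, hπ, Finsupp.zero_apply]
  have hsymm : ∀ y, w (2 * c - y) = w y := fun y => by rw [← mapDomain_sub_left_apply, hr]
  set b := doubleCoverHom n c with hb
  -- `half` picks one point from each orbit `{a, 2b - a}` with `a ≠ b`
  let half : ZMod n → k := fun a => if a.val < (2 * b - a).val then 1 else 0
  refine ⟨fun i => half i * w i, ?_⟩
  ext y
  rw [Finsupp.add_apply, mapDomain_sub_left_apply, fiberDiff_apply hw, fiberDiff_apply hw, hsymm,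
    doubleCoverHom_two_mul_sub, ← hb, ← add_mul]
  by_cases hy : doubleCoverHom n y = b
  · rcases (doubleCoverHom_eq_iff n).1 hy with rfl | rfl
    · rw [hc, mul_zero]
    · rw [hw, hc, neg_zero, mul_zero]
  · have h2 : IsUnit (2 : ZMod n) := by
      simpa using (ZMod.isUnit_iff_coprime 2 n).2 (Nat.coprime_two_left.2 hodd)
    have hval : (2 * b - doubleCoverHom n y).val ≠ (doubleCoverHom n y).val := fun h =>
      hy (h2.mul_left_cancel (by linear_combination ZMod.val_injective n h)).symm
    simp only [half, sub_sub_cancel]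
    split_ifs <;> first | omega | simp

theorem isSymmetricOver_iff (hodd : Odd n) (c : ZMod (2 * n)) (u : ZMod (2 * n) →₀ k) :
    IsSymmetricOver c u ↔ ∃ (β : k) (α : ℕ → k),
      u = single c β + single ((n : ZMod (2 * n)) + c) (1 - β)
        + ∑ i ∈ Finset.range n, α i • (single (i : ZMod (2 * n)) 1
          - single ((n : ZMod (2 * n)) + i) 1 + single (2 * c - i) 1
          - single ((n : ZMod (2 * n)) + 2 * c - i) 1) := by
  simp only [sum_smul_template]
  refine ⟨fun hu => ?_, fun ⟨β, α, hu⟩ => hu ▸ (isSymmetricOver_base c β).add_fiberDiff α⟩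
  have : NeZero n := ⟨hodd.pos.ne'⟩
  have hbase := isSymmetricOver_base c (u c)
  obtain ⟨α, hα⟩ := exists_eq_fiberDiff_add_mapDomain hodd
    (w := u - (single c (u c) + single ((n : ZMod (2 * n)) + c) (1 - u c)))
    (by rw [mapDomain_sub, hu.1, hbase.1, sub_self])
    (by rw [mapDomain_sub, hu.2, hbase.2])
    (by simp [natCast_add_ne_self n c])
  exact ⟨u c, α, by rw [← hα, add_sub_cancel]⟩

end NormalForm

theorem idempotents_of_dihedral_double_cover_general {k : Type*} [CommRing k] [IsDomain k]
    (n : ℕ) (hodd : Odd n)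
    (htriv : ∀ u : ZMod n →₀ k, u ≠ 0 → qmul (dihedralOp n) u u = u →
      ∃ x : ZMod n, u = Finsupp.single x 1) :
    {u : ZMod (2 * n) →₀ k | u ≠ 0 ∧ qmul (dihedralOp (2 * n)) u u = u} =
      {u : ZMod (2 * n) →₀ k | ∃ (j : ℕ) (β : k) (α : ℕ → k), j < n ∧
        u = Finsupp.single ((j : ZMod (2 * n))) β
            + Finsupp.single ((n : ZMod (2 * n)) + j) (1 - β)
            + ∑ i ∈ Finset.range n, α i •
                (Finsupp.single ((i : ZMod (2 * n))) (1 : k)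
                  - Finsupp.single ((n : ZMod (2 * n)) + i) 1
                  + Finsupp.single (2 * (j : ZMod (2 * n)) - i) 1
                  - Finsupp.single ((n : ZMod (2 * n)) + 2 * j - i) 1)} := by
  have : NeZero n := ⟨hodd.pos.ne'⟩
  ext u
  simp only [Set.mem_ofPred_eq, ne_zero_and_qmul_self_iff htriv, isSymmetricOver_iff hodd,
    exists_and_left]

/-- Let `n ≥ 3` be odd and `k` an integral domain. If `k[R_n]` has only
trivial idempotents, then the idempotents of `k[R_{2n}]` are exactly the
elements `β e_j + (1-β) e_{n+j} + ∑_{i=0}^{n-1} α_i (e_i - e_{n+i} + e_{2j-i}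
- e_{n+2j-i})` with `0 ≤ j ≤ n-1` and `α_i, β ∈ k` (indices mod `2n`). -/
theorem idempotents_of_dihedral_double_cover {k : Type*} [CommRing k] [IsDomain k]
    (n : ℕ) (hn : 3 ≤ n) (hodd : Odd n)
    (htriv : ∀ u : ZMod n →₀ k, u ≠ 0 → qmul (dihedralOp n) u u = u →
      ∃ x : ZMod n, u = Finsupp.single x 1) :
    {u : ZMod (2 * n) →₀ k | u ≠ 0 ∧ qmul (dihedralOp (2 * n)) u u = u} =
      {u : ZMod (2 * n) →₀ k | ∃ (j : ℕ) (β : k) (α : ℕ → k), j < n ∧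
        u = Finsupp.single ((j : ZMod (2 * n))) β
            + Finsupp.single ((n : ZMod (2 * n)) + j) (1 - β)
            + ∑ i ∈ Finset.range n, α i •
                (Finsupp.single ((i : ZMod (2 * n))) (1 : k)
                  - Finsupp.single ((n : ZMod (2 * n)) + i) 1
                  + Finsupp.single (2 * (j : ZMod (2 * n)) - i) 1
                  - Finsupp.single ((n : ZMod (2 * n)) + 2 * j - i) 1)} :=
  idempotents_of_dihedral_double_cover_general n hodd htriv
end

section
/- Let X be a finite quandle and u = ∑_{x∈X} α_x e_x an idempotent of the complex quandle algebra ℂ[X], and let S_u : ℂ[X] → ℂ[X] be the ℂ-linear operator S_u(w) = w·u. Then Trace(S_u) = ∑_{x∈X} α_x · |{y ∈ X : y∗x = y}|. Moreover, if X is latin (each left multiplication y ↦ x∗y is a bijection of X), then Trace(S_u) = ε(u) and this value is 0 or 1. -/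
lemma aug_add {X : Type*} (f g : X →₀ ℂ) : aug (f + g) = aug f + aug g :=
  Finsupp.sum_add_index' (fun _ => rfl) (fun _ _ _ => rfl)

noncomputable def augHom (X : Type*) : (X →₀ ℂ) →+ ℂ := AddMonoidHom.mk' aug (aug_add)

lemma aug_qmul {X : Type*} (op : X → X → X) (f g : X →₀ ℂ) :
    aug (qmul op f g) = aug f * aug g := by
  show augHom X (qmul op f g) = aug f * aug g
  unfold qmul
  rw [map_finsuppSum]
  simp only [map_finsuppSum]
  have hs : ∀ (z : X) (c : ℂ), augHom X (Finsupp.single z c) = c := fun z c => by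
    show aug _ = c
    simp [aug, Finsupp.sum_single_index]
  simp only [hs]
  unfold aug
  rw [Finsupp.sum_mul]
  exact Finsupp.sum_congr fun x _ => (Finsupp.mul_sum _ _).symm

lemma qmul_single_apply {X : Type*} [Fintype X] [DecidableEq X] (op : X → X → X)
    (y z : X) (u : X →₀ ℂ) :
    (qmul op (Finsupp.single y 1) u) z = ∑ x : X, if op y x = z then u x else 0 := by
  unfold qmul
  rw [Finsupp.sum_single_index (by simp)]
  rw [Finsupp.sum_fintype _ _ (by simp)]
  rw [Finsupp.finset_sum_apply]
  refine Finset.sum_congr rfl fun x _ => ?_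
  simp [Finsupp.single_apply]

/-- For a finite quandle `X` and an idempotent `u = ∑ α_x e_x` of `ℂ[X]`, the
trace of the right multiplication operator `S_u : w ↦ w·u` equals
`∑_x α_x |Fixed(S_{e_x})|`; moreover, if `X` is latin then the trace equals
the augmentation `ε(u)`, which is `0` or `1`. -/
theorem trace_of_right_mult_by_idempotent {X : Type*} [Fintype X] [DecidableEq X]
    (op : X → X → X)
    (hidem : ∀ x, op x x = x)
    (hbij : ∀ y, Function.Bijective (fun x => op x y))
    (hdist : ∀ x y z, op (op x y) z = op (op x z) (op y z))
    (u : X →₀ ℂ) (hu : u ≠ 0) (hid : qmul op u u = u)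
    (Su : (X →₀ ℂ) →ₗ[ℂ] (X →₀ ℂ)) (hSu : ∀ w, Su w = qmul op w u) :
    LinearMap.trace ℂ (X →₀ ℂ) Su
      = ∑ x : X, u x * ((Finset.univ.filter fun y => op y x = y).card : ℂ) ∧
    ((∀ x : X, Function.Bijective (fun y => op x y)) →
      LinearMap.trace ℂ (X →₀ ℂ) Su = aug u ∧ (aug u = 0 ∨ aug u = 1)) := by
  have haug : aug u = ∑ x : X, u x := by
    unfold aug; rw [Finsupp.sum_fintype _ _ (by simp)]
  have htr : LinearMap.trace ℂ (X →₀ ℂ) Su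
      = ∑ x : X, u x * ((Finset.univ.filter fun y => op y x = y).card : ℂ) := by
    rw [LinearMap.trace_eq_matrix_trace ℂ (Finsupp.basisSingleOne) Su]
    rw [Matrix.trace]
    have hdiag : ∀ y : X, (LinearMap.toMatrix Finsupp.basisSingleOne Finsupp.basisSingleOne Su) y y
        = ∑ x : X, if op y x = y then u x else 0 := by
      intro y
      rw [LinearMap.toMatrix_apply]
      simp only [Finsupp.coe_basisSingleOne, Finsupp.basisSingleOne_repr, LinearEquiv.refl_apply]
      rw [hSu, qmul_single_apply]
    simp only [Matrix.diag_apply, hdiag]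
    rw [Finset.sum_comm]
    refine Finset.sum_congr rfl fun x _ => ?_
    rw [← Finset.sum_filter, Finset.sum_const, nsmul_eq_mul, mul_comm]
  refine ⟨htr, fun hlatin => ?_⟩
  have hfix : ∀ x : X, (Finset.univ.filter fun y => op y x = y) = {x} := by
    intro x
    ext y
    simp only [Finset.mem_filter, Finset.mem_univ, true_and, Finset.mem_singleton]
    constructor
    · intro h
      have : op y x = op y y := by rw [h, hidem]
      exact ((hlatin y).injective this).symm
    · intro h; rw [h]; exact hidem x
  have h1 : LinearMap.trace ℂ (X →₀ ℂ) Su = aug u := by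
    rw [htr, haug]
    refine Finset.sum_congr rfl fun x _ => ?_
    rw [hfix x]; simp
  refine ⟨h1, ?_⟩
  have h2 := aug_qmul op u u
  rw [hid] at h2
  rcases mul_eq_zero.mp (show aug u * (aug u - 1) = 0 by linear_combination -h2) with h | h
  · exact Or.inl h
  · exact Or.inr (sub_eq_zero.mp h)
end

section
/- Let R₃ be the dihedral quandle of order three, with elements 0, 1, 2. Then the set of idempotents of the complex quandle algebra ℂ[R₃] is exactly { e₀, e₁, e₂, (1/3)e₀ + (1/3)e₁ + (1/3)e₂, (2/3)e₀ − (1/3)e₁ − (1/3)e₂, −(1/3)e₀ + (2/3)e₁ − (1/3)e₂, −(1/3)e₀ − (1/3)e₁ + (2/3)e₂ }. -/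
/-- The basis element `e_x` of `ℂ[R₃]`. -/
noncomputable def eR3 (x : ZMod 3) : ZMod 3 →₀ ℂ := Finsupp.single x 1

lemma qmul_apply_s17 (u : ZMod 3 →₀ ℂ) (z : ZMod 3) :
    qmul (dihedralOp 3) u u z =
      ∑ x : ZMod 3, ∑ y : ZMod 3, if dihedralOp 3 x y = z then u x * u y else 0 := by
  rw [qmul, Finsupp.sum_apply]
  rw [Finsupp.sum_fintype]
  · refine Finset.sum_congr rfl fun x _ => ?_
    rw [Finsupp.sum_apply, Finsupp.sum_fintype]
    · exact Finset.sum_congr rfl fun y _ => by rw [Finsupp.single_apply]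
    · simp
  · simp

lemma sum3 (f : ZMod 3 → ℂ) : ∑ x : ZMod 3, f x = f 0 + f 1 + f 2 := by
  have : (Finset.univ : Finset (ZMod 3)) = {0,1,2} := by decide
  rw [this, Finset.sum_insert (by decide), Finset.sum_insert (by decide),
    Finset.sum_singleton, add_assoc]

lemma qmul_coeff (u : ZMod 3 →₀ ℂ) :
    qmul (dihedralOp 3) u u 0 = u 0 * u 0 + 2 * (u 1 * u 2) ∧
    qmul (dihedralOp 3) u u 1 = u 1 * u 1 + 2 * (u 0 * u 2) ∧
    qmul (dihedralOp 3) u u 2 = u 2 * u 2 + 2 * (u 0 * u 1) := by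
  refine ⟨?_, ?_, ?_⟩ <;>
  · rw [qmul_apply_s17, sum3]
    rw [sum3, sum3, sum3]
    norm_num [dihedralOp]
    simp +decide only [if_true, if_false]
    ring

lemma eqext (u v : ZMod 3 →₀ ℂ) : u = v ↔ u 0 = v 0 ∧ u 1 = v 1 ∧ u 2 = v 2 := by
  constructor
  · rintro rfl; exact ⟨rfl, rfl, rfl⟩
  · rintro ⟨h0, h1, h2⟩
    ext x
    have hx : x = 0 ∨ x = 1 ∨ x = 2 := by revert x; decide
    rcases hx with rfl | rfl | rfl <;> assumption


lemma alg_fwd (a b c : ℂ) (h0 : ¬(a=0 ∧ b=0 ∧ c=0))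
    (e1 : a*a+2*(b*c) = a) (e2 : b*b+2*(a*c) = b) (e3 : c*c+2*(a*b) = c) :
    (a=1∧b=0∧c=0) ∨ (a=0∧b=1∧c=0) ∨ (a=0∧b=0∧c=1) ∨ (a=1/3∧b=1/3∧c=1/3) ∨
    (a=2/3∧b=-(1/3)∧c=-(1/3)) ∨ (a=-(1/3)∧b=2/3∧c=-(1/3)) ∨ (a=-(1/3)∧b=-(1/3)∧c=2/3) := by
  have hs : (a+b+c) * (a+b+c-1) = 0 := by linear_combination e1+e2+e3
  rcases mul_eq_zero.mp hs with hs0 | hs1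
  · -- a+b+c = 0
    have h12 : (a-b)*(3*c+1) = 0 := by linear_combination e2 - e1 + (a-b)*hs0
    have h23 : (b-c)*(3*a+1) = 0 := by linear_combination e3 - e2 + (b-c)*hs0
    rcases mul_eq_zero.mp h12 with h | h <;> rcases mul_eq_zero.mp h23 with h' | h'
    · exact absurd ⟨by linear_combination (1/3)*hs0 + (2/3)*h + (1/3)*h',
        by linear_combination (1/3)*hs0 - (1/3)*h + (1/3)*h',
        by linear_combination (1/3)*hs0 - (1/3)*h - (2/3)*h'⟩ h0
    · refine Or.inr (Or.inr (Or.inr (Or.inr (Or.inr (Or.inr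
        ⟨by linear_combination (1/3)*h', by linear_combination (1/3)*h' - h,
         by linear_combination hs0 + h - (2/3)*h'⟩)))))
    · refine Or.inr (Or.inr (Or.inr (Or.inr (Or.inl
        ⟨by linear_combination hs0 - h' - (2/3)*h, by linear_combination (1/3)*h + h',
         by linear_combination (1/3)*h⟩))))
    · refine Or.inr (Or.inr (Or.inr (Or.inr (Or.inr (Or.inl
        ⟨by linear_combination (1/3)*h', by linear_combination hs0 - (1/3)*h' - (1/3)*h,
         by linear_combination (1/3)*h⟩)))))
  · -- a+b+c = 1
    have h12 : (a-b)*c = 0 := by linear_combination (-1/3)*e1 + (1/3)*e2 + ((a-b)/3)*hs1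
    have h23 : (b-c)*a = 0 := by linear_combination (-1/3)*e2 + (1/3)*e3 + ((b-c)/3)*hs1
    rcases mul_eq_zero.mp h12 with h | h <;> rcases mul_eq_zero.mp h23 with h' | h'
    · refine Or.inr (Or.inr (Or.inr (Or.inl
        ⟨by linear_combination (1/3)*hs1 + (2/3)*h + (1/3)*h',
         by linear_combination (1/3)*hs1 - (1/3)*h + (1/3)*h',
         by linear_combination (1/3)*hs1 - (1/3)*h - (2/3)*h'⟩)))
    · exact Or.inr (Or.inr (Or.inl ⟨h', by linear_combination h' - h,
        by linear_combination hs1 - 2*h' + h⟩))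
    · exact Or.inl ⟨by linear_combination hs1 - h' - 2*h, by linear_combination h' + h, h⟩
    · exact Or.inr (Or.inl ⟨h', by linear_combination hs1 - h' - h, h⟩)

/-- The idempotents of the complex quandle algebra `ℂ[R₃]` of the dihedral
quandle of order three are exactly `e₀, e₁, e₂, ⅓(e₀+e₁+e₂),
⅔e₀-⅓e₁-⅓e₂, -⅓e₀+⅔e₁-⅓e₂, -⅓e₀-⅓e₁+⅔e₂`. -/
theorem idempotents_complex_dihedral_three :
    {u : ZMod 3 →₀ ℂ | u ≠ 0 ∧ qmul (dihedralOp 3) u u = u} =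
      {eR3 0, eR3 1, eR3 2,
       (1/3 : ℂ) • eR3 0 + (1/3 : ℂ) • eR3 1 + (1/3 : ℂ) • eR3 2,
       (2/3 : ℂ) • eR3 0 - (1/3 : ℂ) • eR3 1 - (1/3 : ℂ) • eR3 2,
       -(1/3 : ℂ) • eR3 0 + (2/3 : ℂ) • eR3 1 - (1/3 : ℂ) • eR3 2,
       -(1/3 : ℂ) • eR3 0 - (1/3 : ℂ) • eR3 1 + (2/3 : ℂ) • eR3 2} := by
  ext u
  obtain ⟨q1, q2, q3⟩ := qmul_coeff u
  simp only [Set.mem_setOf_eq, Set.mem_insert_iff, Set.mem_singleton_iff]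
  rw [Ne, eqext u 0, eqext (qmul (dihedralOp 3) u u) u, q1, q2, q3,
    eqext u (eR3 0), eqext u (eR3 1), eqext u (eR3 2),
    eqext u _, eqext u _, eqext u _, eqext u _]
  simp only [Finsupp.zero_apply, Finsupp.add_apply, Finsupp.sub_apply,
    Finsupp.smul_apply, smul_eq_mul, Finsupp.neg_apply]
  simp +decide only [eR3, Finsupp.single_apply, if_true, if_false]
  norm_num
  constructor
  · rintro ⟨h0, e1, e2, e3⟩
    exact alg_fwd _ _ _ (fun ⟨x, y, z⟩ => h0 x y z) e1 e2 e3
  · rintro (⟨h1,h2,h3⟩|⟨h1,h2,h3⟩|⟨h1,h2,h3⟩|⟨h1,h2,h3⟩|⟨h1,h2,h3⟩|⟨h1,h2,h3⟩|⟨h1,h2,h3⟩) <;>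
      rw [h1, h2, h3] <;> norm_num
end

section
/- Let R₃ be the dihedral quandle of order three. Then the Peirce spectrum of the complex quandle algebra ℂ[R₃] is {0, 1, −1}: a complex number λ is an eigenvalue of the right multiplication operator S_u : w ↦ w·u on ℂ[R₃] for some idempotent u of ℂ[R₃] if and only if λ ∈ {0, 1, −1}. -/
lemma qmul_apply3 (f g : ZMod 3 →₀ ℂ) (z : ZMod 3) :
    qmul (dihedralOp 3) f g z =
      ∑ x : ZMod 3, ∑ y : ZMod 3, if dihedralOp 3 x y = z then f x * g y else 0 := by
  rw [qmul, Finsupp.sum_apply, Finsupp.sum_fintype]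
  · refine Finset.sum_congr rfl fun x _ => ?_
    rw [Finsupp.sum_apply, Finsupp.sum_fintype]
    · refine Finset.sum_congr rfl fun y _ => ?_
      rw [Finsupp.single_apply]
    · intro y; simp
  · intro x; simp

lemma sum_zmod3 (F : ZMod 3 → ℂ) : ∑ x : ZMod 3, F x = F 0 + F 1 + F 2 :=
  Fin.sum_univ_three F

lemma qmul_apply0 (f g : ZMod 3 →₀ ℂ) :
    qmul (dihedralOp 3) f g 0 = f 0 * g 0 + f 1 * g 2 + f 2 * g 1 := by
  rw [qmul_apply3, sum_zmod3, sum_zmod3, sum_zmod3, sum_zmod3]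
  simp (config := { decide := true }) only [dihedralOp]
  norm_num

lemma qmul_apply1 (f g : ZMod 3 →₀ ℂ) :
    qmul (dihedralOp 3) f g 1 = f 0 * g 2 + f 1 * g 1 + f 2 * g 0 := by
  rw [qmul_apply3, sum_zmod3, sum_zmod3, sum_zmod3, sum_zmod3]
  simp (config := { decide := true }) only [dihedralOp]
  norm_num

lemma qmul_apply2 (f g : ZMod 3 →₀ ℂ) :
    qmul (dihedralOp 3) f g 2 = f 0 * g 1 + f 1 * g 0 + f 2 * g 2 := by
  rw [qmul_apply3, sum_zmod3, sum_zmod3, sum_zmod3, sum_zmod3]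
  simp (config := { decide := true }) only [dihedralOp]
  norm_num

lemma zmod3_cases : ∀ z : ZMod 3, z = 0 ∨ z = 1 ∨ z = 2 := by decide

lemma finsupp_zmod3_ext {f g : ZMod 3 →₀ ℂ} (h0 : f 0 = g 0) (h1 : f 1 = g 1)
    (h2 : f 2 = g 2) : f = g := by
  ext z
  rcases zmod3_cases z with rfl | rfl | rfl <;> assumption

/-- The Peirce spectrum of the complex quandle algebra `ℂ[R₃]` of the dihedral
quandle of order three is `{0, 1, -1}`: a complex number `λ` is an eigenvalue
of the right multiplication operator `S_u : w ↦ w·u` for some idempotent `u`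
of `ℂ[R₃]` if and only if `λ ∈ {0, 1, -1}`. -/
theorem peirce_spectrum_dihedral_three :
    ∀ l : ℂ,
      (∃ u : ZMod 3 →₀ ℂ, (u ≠ 0 ∧ qmul (dihedralOp 3) u u = u) ∧
        ∃ w : ZMod 3 →₀ ℂ, w ≠ 0 ∧ qmul (dihedralOp 3) w u = l • w) ↔
      (l = 0 ∨ l = 1 ∨ l = -1) := by
  intro l
  constructor
  · rintro ⟨u, ⟨-, hu⟩, w, hwne, hw⟩
    set a := u 0 with ha
    set b := u 1 with hb
    set c := u 2 with hc
    -- idempotency equations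
    have hu0 := DFunLike.congr_fun hu (0 : ZMod 3)
    have hu1 := DFunLike.congr_fun hu (1 : ZMod 3)
    have hu2 := DFunLike.congr_fun hu (2 : ZMod 3)
    rw [qmul_apply0] at hu0
    rw [qmul_apply1] at hu1
    rw [qmul_apply2] at hu2
    -- eigenvector equations
    have he0 := DFunLike.congr_fun hw (0 : ZMod 3)
    have he1 := DFunLike.congr_fun hw (1 : ZMod 3)
    have he2 := DFunLike.congr_fun hw (2 : ZMod 3)
    rw [qmul_apply0, Finsupp.smul_apply, smul_eq_mul] at he0
    rw [qmul_apply1, Finsupp.smul_apply, smul_eq_mul] at he1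
    rw [qmul_apply2, Finsupp.smul_apply, smul_eq_mul] at he2
    -- A² = A
    have hA : (a + b + c) ^ 2 = a + b + c := by linear_combination hu0 + hu1 + hu2
    -- D² = D
    have hD : (a ^ 2 + b ^ 2 + c ^ 2 - a * b - b * c - c * a) ^ 2 =
        a ^ 2 + b ^ 2 + c ^ 2 - a * b - b * c - c * a := by
      linear_combination
        ((2*a^2 + 4*b*c - b^2 - c^2 - 2*a*b - 2*a*c + 2*a - b - c) / 2) * hu0 +
        ((2*(b^2 + 2*a*c) + 2*b - (a^2 + 2*b*c) - (c^2 + 2*a*b) - a - c) / 2) * hu1 +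
        ((2*(c^2 + 2*a*b) + 2*c - (a^2 + 2*b*c) - (b^2 + 2*a*c) - a - b) / 2) * hu2
    -- characteristic equation
    have key : (l - (a + b + c)) *
        (l ^ 2 - (a ^ 2 + b ^ 2 + c ^ 2 - a * b - b * c - c * a)) = 0 := by
      obtain ⟨z, hz⟩ := Finsupp.ne_iff.mp hwne
      simp only [Finsupp.coe_zero, Pi.zero_apply] at hz
      rcases zmod3_cases z with rfl | rfl | rfl
      · have h : (l - (a + b + c)) *
            (l ^ 2 - (a ^ 2 + b ^ 2 + c ^ 2 - a * b - b * c - c * a)) * w 0 = 0 := by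
          linear_combination (-((l - b) * (l - c) - a ^ 2)) * he0 +
            (-(c * (l - c) + a * b)) * he1 + (-(c * a + b * (l - b))) * he2
        exact (mul_eq_zero.mp h).resolve_right hz
      · have h : (l - (a + b + c)) *
            (l ^ 2 - (a ^ 2 + b ^ 2 + c ^ 2 - a * b - b * c - c * a)) * w 1 = 0 := by
          linear_combination (-(c * (l - c) + a * b)) * he0 +
            (-((l - a) * (l - c) - b ^ 2)) * he1 + (-(a * (l - a) + b * c)) * he2
        exact (mul_eq_zero.mp h).resolve_right hz
      · have h : (l - (a + b + c)) *
            (l ^ 2 - (a ^ 2 + b ^ 2 + c ^ 2 - a * b - b * c - c * a)) * w 2 = 0 := by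
          linear_combination (-(c * a + b * (l - b))) * he0 +
            (-(a * (l - a) + b * c)) * he1 + (-((l - a) * (l - b) - c ^ 2)) * he2
        exact (mul_eq_zero.mp h).resolve_right hz
    rcases mul_eq_zero.mp key with h | h
    · -- l = A, A² = A
      have h2 : l * (l - 1) = 0 := by
        linear_combination hA + (l + (a + b + c) - 1) * h
      rcases mul_eq_zero.mp h2 with h3 | h3
      · exact Or.inl h3
      · exact Or.inr (Or.inl (sub_eq_zero.mp h3))
    · -- l² = D, D² = D
      have h4 : l ^ 2 * (l - 1) * (l + 1) = 0 := by
        linear_combination hD +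
          (l ^ 2 + (a ^ 2 + b ^ 2 + c ^ 2 - a * b - b * c - c * a) - 1) * h
      rcases mul_eq_zero.mp h4 with h5 | h5
      · rcases mul_eq_zero.mp h5 with h6 | h6
        · exact Or.inl (pow_eq_zero_iff two_ne_zero |>.mp h6)
        · exact Or.inr (Or.inl (sub_eq_zero.mp h6))
      · exact Or.inr (Or.inr (by linear_combination h5))
  · intro hl
    rcases hl with rfl | rfl | rfl
    · -- l = 0
      refine ⟨Finsupp.single 0 (1/3) + Finsupp.single 1 (1/3) + Finsupp.single 2 (1/3),
        ⟨?_, ?_⟩, Finsupp.single 1 1 - Finsupp.single 2 1, ?_, ?_⟩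
      · intro h
        have := DFunLike.congr_fun h (0 : ZMod 3)
        simp (config := { decide := true }) [Finsupp.single_apply] at this
      · refine finsupp_zmod3_ext ?_ ?_ ?_ <;>
          [rw [qmul_apply0]; rw [qmul_apply1]; rw [qmul_apply2]] <;>
          simp (config := { decide := true }) [Finsupp.single_apply] <;> norm_num
      · intro h
        have := DFunLike.congr_fun h (1 : ZMod 3)
        simp (config := { decide := true }) [Finsupp.single_apply] at this
      · refine finsupp_zmod3_ext ?_ ?_ ?_ <;>
          [rw [qmul_apply0]; rw [qmul_apply1]; rw [qmul_apply2]] <;>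
          simp (config := { decide := true }) [Finsupp.single_apply]
    · -- l = 1
      refine ⟨Finsupp.single 0 1, ⟨(fun h => one_ne_zero (Finsupp.single_eq_zero.mp h)), ?_⟩,
        Finsupp.single 0 1, (fun h => one_ne_zero (Finsupp.single_eq_zero.mp h)), ?_⟩
      · refine finsupp_zmod3_ext ?_ ?_ ?_ <;>
          [rw [qmul_apply0]; rw [qmul_apply1]; rw [qmul_apply2]] <;>
          simp (config := { decide := true }) [Finsupp.single_apply]
      · refine finsupp_zmod3_ext ?_ ?_ ?_ <;>
          [rw [qmul_apply0]; rw [qmul_apply1]; rw [qmul_apply2]] <;>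
          simp (config := { decide := true }) [Finsupp.single_apply]
    · -- l = -1
      refine ⟨Finsupp.single 0 1, ⟨(fun h => one_ne_zero (Finsupp.single_eq_zero.mp h)), ?_⟩,
        Finsupp.single 1 1 - Finsupp.single 2 1, ?_, ?_⟩
      · refine finsupp_zmod3_ext ?_ ?_ ?_ <;>
          [rw [qmul_apply0]; rw [qmul_apply1]; rw [qmul_apply2]] <;>
          simp (config := { decide := true }) [Finsupp.single_apply]
      · intro h
        have := DFunLike.congr_fun h (1 : ZMod 3)
        simp (config := { decide := true }) [Finsupp.single_apply] at this
      · refine finsupp_zmod3_ext ?_ ?_ ?_ <;>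
          [rw [qmul_apply0]; rw [qmul_apply1]; rw [qmul_apply2]] <;>
          simp (config := { decide := true }) [Finsupp.single_apply]
end
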